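/- arXiv:1604.04227 — 10 statements merged into one kernel-verified Lean document; each statement's English description precedes it below -/
import Mathlib

section
/- The functor P preserves finiteness: if Cn satisfies finiteness (for all A, x ∈ Cn(A) iff there is a finite A' ⊆ A with x ∈ Cn(A')), and Cn is monotonic, then Cn_P also satisfies finiteness: x ∈ Cn_P(A) iff there is a finite A' ⊆ A with x ∈ Cn_P(A'). -/
/-- Paraconsistentization of a consequence operator. -/
def CnP {X : Type} (Cn : Set X → Set X) (A : Set X) : Set X :=
  {x | ∃ A' : Set X, A' ⊆ A ∧ Cn A' ≠ Set.univ ∧ x ∈ Cn A'}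

/-- Homomorphism of consequence structures. -/
def IsHom {X X' : Type} (Cn : Set X → Set X) (Cn' : Set X' → Set X') (h : X → X') : Prop :=
  Function.Injective h ∧ ∀ A : Set X, h '' Cn A = Cn' (h '' A)
theorem stmt9 {X : Type} (Cn : Set X → Set X)
    (hmono : ∀ A B : Set X, A ⊆ B → Cn A ⊆ Cn B)
    (hfin : ∀ (A : Set X) (x : X), x ∈ Cn A ↔ ∃ A' : Set X, A' ⊆ A ∧ A'.Finite ∧ x ∈ Cn A') :
    ∀ (A : Set X) (x : X),
      x ∈ CnP Cn A ↔ ∃ A' : Set X, A' ⊆ A ∧ A'.Finite ∧ x ∈ CnP Cn A' := by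
  intro A x
  constructor
  · rintro ⟨A', hA'A, hne, hx⟩
    obtain ⟨B, hBA', hBfin, hxB⟩ := (hfin A' x).mp hx
    have hBne : Cn B ≠ Set.univ := fun h => hne (Set.eq_univ_of_univ_subset (h ▸ hmono B A' hBA'))
    exact ⟨B, hBA'.trans hA'A, hBfin, B, subset_rfl, hBne, hxB⟩
  · rintro ⟨A', hA'A, _, B, hBA', hne, hx⟩
    exact ⟨B, hBA'.trans hA'A, hne, hx⟩
end

section
/- If (X, Cn) is normal (Cn satisfies inclusion A ⊆ Cn(A), idempotency Cn(Cn(A)) ⊆ Cn(A), and monotonicity) and there exists u ∈ X such that Cn({u}) = X, then every subset A ⊆ X is Cn_P-consistent, i.e. Cn_P(A) ≠ X for all A. -/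
theorem stmt10 {X : Type} (Cn : Set X → Set X)
    (hincl : ∀ A : Set X, A ⊆ Cn A)
    (hidem : ∀ A : Set X, Cn (Cn A) ⊆ Cn A)
    (hmono : ∀ A B : Set X, A ⊆ B → Cn A ⊆ Cn B)
    (u : X) (hu : Cn {u} = Set.univ) :
    ∀ A : Set X, CnP Cn A ≠ Set.univ := by
  intro A hA
  have hu' : u ∈ CnP Cn A := hA ▸ Set.mem_univ u
  obtain ⟨A', _, hne, huA'⟩ := hu'
  apply hne
  apply Set.eq_univ_of_univ_subset
  calc Set.univ = Cn {u} := hu.symm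
    _ ⊆ Cn (Cn A') := hmono _ _ (Set.singleton_subset_iff.mpr huA')
    _ ⊆ Cn A' := hidem _
end

section
/- Under the hypotheses that (X, Cn) is normal and there exists u ∈ X with Cn({u}) = X, the functor P is idempotent on (X, Cn): (Cn_P)_P = Cn_P, i.e. for all A ⊆ X, Cn_P applied to the structure (X, Cn_P) agrees with Cn_P. -/
theorem stmt11 {X : Type} (Cn : Set X → Set X)
    (hincl : ∀ A : Set X, A ⊆ Cn A)
    (hidem : ∀ A : Set X, Cn (Cn A) ⊆ Cn A)
    (hmono : ∀ A B : Set X, A ⊆ B → Cn A ⊆ Cn B)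
    (u : X) (hu : Cn {u} = Set.univ) :
    CnP (CnP Cn) = CnP Cn := by
  funext A
  ext x
  constructor
  · rintro ⟨A', hA', -, B, hB, hBne, hxB⟩
    exact ⟨B, hB.trans hA', hBne, hxB⟩
  · rintro ⟨A', hA', hne, hx⟩
    refine ⟨A', hA', ?_, A', subset_rfl, hne, hx⟩
    intro h
    obtain ⟨y, hy⟩ := Set.ne_univ_iff_exists_notMem _ |>.mp hne
    have : y ∈ CnP Cn A' := h ▸ Set.mem_univ y
    obtain ⟨B, hB, -, hyB⟩ := this
    exact hy (hmono B A' hB hyB)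
end

section
/- If (X, Cn) is normal, explosive, satisfies joint consistency, and satisfies the conjunctive property, then (X, Cn_P) is paraconsistent: there exists A ⊆ X and x ∈ X with x ∈ Cn_P(A) and ¬x ∈ Cn_P(A) but Cn_P(A) ≠ X. -/
theorem stmt12 {X : Type} (neg : X → X) (Cn : Set X → Set X)
    (hincl : ∀ A : Set X, A ⊆ Cn A)
    (hidem : ∀ A : Set X, Cn (Cn A) ⊆ Cn A)
    (hmono : ∀ A B : Set X, A ⊆ B → Cn A ⊆ Cn B)
    (hexp : ∀ A : Set X, (∃ x : X, x ∈ Cn A ∧ neg x ∈ Cn A) → Cn A = Set.univ)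
    (hjoint : ∃ x : X, Cn {x} ≠ Set.univ ∧ Cn {neg x} ≠ Set.univ ∧ Cn {x, neg x} = Set.univ)
    (hconj : ∀ x y : X, ∃ z : X, Cn {x, y} = Cn {z}) :
    ∃ (A : Set X) (x : X), x ∈ CnP Cn A ∧ neg x ∈ CnP Cn A ∧ CnP Cn A ≠ Set.univ := by
  obtain ⟨x, hx, hnx, hboth⟩ := hjoint
  obtain ⟨z, hz⟩ := hconj x (neg x)
  refine ⟨{x, neg x}, x, ⟨{x}, ?_, hx, hincl _ rfl⟩,
    ⟨{neg x}, ?_, hnx, hincl _ rfl⟩, ?_⟩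
  · intro a ha; exact Or.inl ha
  · intro a ha; exact Or.inr ha
  · intro h
    have hzmem : z ∈ CnP Cn {x, neg x} := h ▸ Set.mem_univ z
    obtain ⟨A', hsub, hne, hzin⟩ := hzmem
    apply hne
    have h1 : Cn {z} ⊆ Cn A' := by
      intro a ha
      exact hidem A' (hmono _ _ (Set.singleton_subset_iff.mpr hzin) ha)
    have : (Set.univ : Set X) ⊆ Cn A' := by
      rw [← hboth, hz]; exact h1
    exact Set.eq_univ_of_univ_subset this
end

section
/- In paraclassical propositional logic, inclusion fails: {p ∧ ¬p} ⊄ Cn_P({p ∧ ¬p}); specifically p ∧ ¬p ∉ Cn_P({p ∧ ¬p}). -/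
/-- Classical propositional formulas. -/
inductive PropForm : Type where
  | var : Nat → PropForm
  | neg : PropForm → PropForm
  | conj : PropForm → PropForm → PropForm
  | disj : PropForm → PropForm → PropForm
  | impl : PropForm → PropForm → PropForm

/-- Truth-value of a formula under a valuation. -/
def PropForm.eval (v : Nat → Bool) : PropForm → Bool
  | var n => v n
  | neg a => !a.eval v
  | conj a b => a.eval v && b.eval v
  | disj a b => a.eval v || b.eval v
  | impl a b => !a.eval v || b.eval v

/-- The classical consequence operator. -/
def Cn (A : Set PropForm) : Set PropForm :=
  {b | ∀ v : Nat → Bool, (∀ a ∈ A, a.eval v = true) → b.eval v = true}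
theorem stmt13 :
    PropForm.conj (PropForm.var 0) (PropForm.neg (PropForm.var 0)) ∉
      CnP Cn {PropForm.conj (PropForm.var 0) (PropForm.neg (PropForm.var 0))} := by
  rintro ⟨A', hsub, hne, hmem⟩
  by_cases h : (PropForm.conj (PropForm.var 0) (PropForm.neg (PropForm.var 0))) ∈ A'
  · apply hne
    ext b
    simp only [Set.mem_univ, iff_true, Cn, Set.mem_setOf_eq]
    intro v hv
    have := hv _ h
    simp [PropForm.eval] at this
  · have hA' : A' = ∅ := by
      apply Set.eq_empty_iff_forall_notMem.mpr
      intro x hx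
      have := hsub hx
      simp at this
      exact h (this ▸ hx)
    subst hA'
    have := hmem (fun _ => true) (by simp)
    simp [PropForm.eval] at this
end

section
/- In paraclassical propositional logic, idempotency fails: with A = {p, ¬p}, we have q ∈ Cn_P(Cn_P(A)) but q ∉ Cn_P(A). -/
theorem stmt14 :
    PropForm.var 1 ∈ CnP Cn (CnP Cn {PropForm.var 0, PropForm.neg (PropForm.var 0)}) ∧
    PropForm.var 1 ∉ CnP Cn {PropForm.var 0, PropForm.neg (PropForm.var 0)} := by
  constructor
  · -- use A' = {p ∨ q, ¬p}
    refine ⟨{PropForm.disj (.var 0) (.var 1), PropForm.neg (.var 0)}, ?_, ?_, ?_⟩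
    · intro x hx
      rcases hx with rfl | hx
      · -- p ∨ q ∈ Cn {p}, with Cn {p} ≠ univ
        refine ⟨{PropForm.var 0}, by intro y hy; simp at hy; simp [hy], ?_, ?_⟩
        · intro h
          have : PropForm.neg (.var 0) ∈ Cn {PropForm.var 0} := by rw [h]; trivial
          have := this (fun _ => true) (by intro a ha; simp at ha; simp [ha, PropForm.eval])
          simp [PropForm.eval] at this
        · intro v hv
          have := hv (PropForm.var 0) (by simp)
          simp [PropForm.eval] at this ⊢
          exact Or.inl this
      · simp at hx
        subst hx
        -- ¬p ∈ Cn {¬p}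
        refine ⟨{PropForm.neg (.var 0)}, by intro y hy; simp at hy; simp [hy], ?_, ?_⟩
        · intro h
          have : PropForm.var 0 ∈ Cn {PropForm.neg (.var 0)} := by rw [h]; trivial
          have := this (fun _ => false) (by intro a ha; simp at ha; simp [ha, PropForm.eval])
          simp [PropForm.eval] at this
        · intro v hv
          exact hv _ (by simp)
    · intro h
      have : PropForm.var 0 ∈ Cn {PropForm.disj (.var 0) (.var 1), PropForm.neg (.var 0)} := by
        rw [h]; trivial
      have := this (fun n => n == 1) (by
        intro a ha
        rcases ha with rfl | ha
        · simp [PropForm.eval]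
        · simp at ha; subst ha; simp [PropForm.eval])
      simp [PropForm.eval] at this
    · intro v hv
      have h1 := hv (PropForm.disj (.var 0) (.var 1)) (by simp)
      have h2 := hv (PropForm.neg (.var 0)) (by simp)
      simp [PropForm.eval] at h1 h2 ⊢
      rcases h1 with h1 | h1
      · simp [h1] at h2
      · exact h1
  · rintro ⟨A', hsub, hne, hq⟩
    by_cases hp : PropForm.var 0 ∈ A'
    · by_cases hn : PropForm.neg (.var 0) ∈ A'
      · apply hne
        ext b
        simp only [Set.mem_univ, iff_true]
        intro v hv
        have h1 := hv _ hp
        have h2 := hv _ hn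
        simp [PropForm.eval] at h1 h2
        simp [PropForm.eval, h1] at h2
      · -- A' ⊆ {p}, valuation v0 = true, v1 = false
        have := hq (fun n => n == 0) (by
          intro a ha
          rcases hsub ha with rfl | h
          · simp [PropForm.eval]
          · simp at h; subst h; exact absurd ha hn)
        simp [PropForm.eval] at this
    · -- p ∉ A', so A' ⊆ {¬p}, valuation all false
      have := hq (fun _ => false) (by
        intro a ha
        rcases hsub ha with rfl | h
        · exact absurd ha hp
        · simp at h; subst h; simp [PropForm.eval])
      simp [PropForm.eval] at this
end

section
/- In paraclassical propositional logic, transitivity fails: with A = {p, ¬p} and B = {p ∨ q, ¬p}, every element of B is in Cn_P(A), and q ∈ Cn_P(B), but q ∉ Cn_P(A). -/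
lemma consistent_of_val {A : Set PropForm} (v : Nat → Bool)
    (h : ∀ a ∈ A, a.eval v = true) : Cn A ≠ Set.univ := by
  intro hu
  have hm : PropForm.neg (PropForm.impl (PropForm.var 0) (PropForm.var 0)) ∈ Cn A := by
    rw [hu]; trivial
  have := hm v h
  simp [PropForm.eval] at this

theorem stmt15 :
    ({PropForm.disj (PropForm.var 0) (PropForm.var 1), PropForm.neg (PropForm.var 0)} : Set PropForm)
      ⊆ CnP Cn {PropForm.var 0, PropForm.neg (PropForm.var 0)} ∧
    PropForm.var 1 ∈
      CnP Cn {PropForm.disj (PropForm.var 0) (PropForm.var 1), PropForm.neg (PropForm.var 0)} ∧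
    PropForm.var 1 ∉ CnP Cn {PropForm.var 0, PropForm.neg (PropForm.var 0)} := by
  refine ⟨?_, ?_, ?_⟩
  · intro x hx
    rcases hx with rfl | hx
    · refine ⟨{PropForm.var 0}, by intro y hy; left; exact hy,
        consistent_of_val (fun _ => true) ?_, ?_⟩
      · intro a ha; rcases ha with rfl; simp [PropForm.eval]
      · intro v hv
        have := hv _ rfl
        simp [PropForm.eval] at this ⊢
        exact Or.inl this
    · rcases hx with rfl
      refine ⟨{PropForm.neg (PropForm.var 0)}, by intro y hy; right; exact hy,
        consistent_of_val (fun _ => false) ?_, ?_⟩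
      · intro a ha; rcases ha with rfl; simp [PropForm.eval]
      · intro v hv; exact hv _ rfl
  · refine ⟨{PropForm.disj (PropForm.var 0) (PropForm.var 1), PropForm.neg (PropForm.var 0)},
      le_refl _, consistent_of_val (fun n => n == 1) ?_, ?_⟩
    · intro a ha; rcases ha with rfl | ha
      · simp [PropForm.eval]
      · rcases ha with rfl; simp [PropForm.eval]
    · intro v hv
      have h1 := hv _ (Or.inl rfl)
      have h2 := hv _ (Or.inr rfl)
      simp [PropForm.eval] at h1 h2 ⊢
      rcases h1 with h | h
      · rw [h2] at h; exact absurd h (by simp)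
      · exact h
  · rintro ⟨A', hsub, hcon, hq⟩
    by_cases hp : PropForm.var 0 ∈ A'
    · by_cases hnp : PropForm.neg (PropForm.var 0) ∈ A'
      · apply hcon
        ext b
        simp only [Set.mem_univ, iff_true]
        intro v hv
        have h1 := hv _ hp
        have h2 := hv _ hnp
        simp [PropForm.eval] at h1 h2
        rw [h1] at h2; exact absurd h2 (by simp)
      · -- valuation: v 0 = true, else false; q false
        have := hq (fun n => n == 0) ?_
        · simp [PropForm.eval] at this
        · intro a ha
          rcases hsub ha with rfl | h
          · simp [PropForm.eval]
          · rcases h with rfl; exact absurd ha hnp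
    · have := hq (fun _ => false) ?_
      · simp [PropForm.eval] at this
      · intro a ha
        rcases hsub ha with rfl | h
        · exact absurd ha hp
        · rcases h with rfl; simp [PropForm.eval]
end

section
/- Weak transitivity holds for Cn_P whenever Cn is a monotonic and transitive consequence operator: if b ∈ Cn_P(A) and c ∈ Cn_P({b}), then c ∈ Cn_P(A). -/
theorem stmt16 {X : Type} (Cn : Set X → Set X)
    (hmono : ∀ A B : Set X, A ⊆ B → Cn A ⊆ Cn B)
    (htrans : ∀ (A B : Set X) (a : X), B ⊆ Cn A → a ∈ Cn B → a ∈ Cn A)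
    (A : Set X) (b c : X) (hb : b ∈ CnP Cn A) (hc : c ∈ CnP Cn {b}) :
    c ∈ CnP Cn A := by
  obtain ⟨A', hA'sub, hA'ne, hbA'⟩ := hb
  obtain ⟨B', hB'sub, hB'ne, hcB'⟩ := hc
  rcases Set.subset_singleton_iff_eq.mp hB'sub with h | h
  · subst h
    exact ⟨∅, Set.empty_subset A, hB'ne, hcB'⟩
  · subst h
    refine ⟨A', hA'sub, hA'ne, htrans A' {b} c ?_ hcB'⟩
    simpa using hbA'
end

section
/- The deduction theorem transfers to Cn_P: if Cn satisfies the deduction theorem (A ∪ {a} ⊢ b implies A ⊢ a → b) and is monotonic, then A ∪ {a} ⊢_P b implies A ⊢_P a → b, where ⊢_P denotes membership in Cn_P. -/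
theorem stmt17 {X : Type} (imp : X → X → X) (Cn : Set X → Set X)
    (hmono : ∀ A B : Set X, A ⊆ B → Cn A ⊆ Cn B)
    (hded : ∀ (A : Set X) (a b : X), b ∈ Cn (A ∪ {a}) → imp a b ∈ Cn A)
    (A : Set X) (a b : X) (h : b ∈ CnP Cn (A ∪ {a})) :
    imp a b ∈ CnP Cn A := by
  obtain ⟨A', hsub, hcons, hb⟩ := h
  refine ⟨A' \ {a}, ?_, ?_, ?_⟩
  · intro x hx
    rcases hsub hx.1 with h1 | h1
    · exact h1
    · exact absurd h1 hx.2
  · intro hu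
    apply hcons
    apply Set.eq_univ_of_univ_subset
    rw [← hu]
    exact hmono _ _ Set.diff_subset
  · exact hded _ _ _ (hmono A' _ (fun x hx => by
      by_cases hxa : x = a
      · exact Or.inr hxa
      · exact Or.inl ⟨hx, hxa⟩) hb)
end

section
/- In paraclassical propositional logic, modus ponens fails: there exist A ⊆ X and formulas a, b with a ∈ Cn_P(A) and (a → b) ∈ Cn_P(A) but b ∉ Cn_P(A). For instance, with A = {p, ¬p, p → (q ∧ ¬q)}, no Cn-consistent subset of A entails q ∧ ¬q. -/
namespace PropForm

theorem eval_conj_neg_self (v : Nat → Bool) (a : PropForm) :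
    (conj a (neg a)).eval v = false := by
  simp [eval]

theorem mem_Cn_of_mem {A : Set PropForm} {a : PropForm} (ha : a ∈ A) : a ∈ Cn A :=
  fun _ hv => hv a ha

theorem Cn_ne_univ_iff {A : Set PropForm} :
    Cn A ≠ Set.univ ↔ ∃ v : Nat → Bool, ∀ a ∈ A, a.eval v = true := by
  constructor
  · intro hA
    by_contra! hunsat
    refine hA (Set.eq_univ_of_forall fun b v hv => ?_)
    obtain ⟨a, ha, hfalse⟩ := hunsat v
    exact absurd (hv a ha) (by simp [hfalse])
  · rintro ⟨v, hv⟩ hA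
    have hcontra : conj (var 0) (neg (var 0)) ∈ Cn A := hA ▸ Set.mem_univ _
    simpa [eval_conj_neg_self] using hcontra v hv

theorem mem_CnP_of_mem {A : Set PropForm} {a : PropForm} (ha : a ∈ A)
    (hsat : ∃ v : Nat → Bool, a.eval v = true) : a ∈ CnP Cn A := by
  obtain ⟨v, hv⟩ := hsat
  refine ⟨{a}, Set.singleton_subset_iff.mpr ha, Cn_ne_univ_iff.mpr ⟨v, ?_⟩, mem_Cn_of_mem rfl⟩
  simpa using hv

theorem conj_neg_self_not_mem_CnP (B : Set PropForm) (a : PropForm) :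
    conj a (neg a) ∉ CnP Cn B := by
  rintro ⟨A', -, hcons, hcontra⟩
  obtain ⟨v, hv⟩ := Cn_ne_univ_iff.mp hcons
  simpa [eval_conj_neg_self] using hcontra v hv

end PropForm

theorem stmt18 :
    ∃ (A : Set PropForm) (a b : PropForm),
      a ∈ CnP Cn A ∧ PropForm.impl a b ∈ CnP Cn A ∧ b ∉ CnP Cn A := by
  let p := PropForm.var 0
  let q := PropForm.var 1
  refine ⟨{p, p.neg, p.impl (q.conj q.neg)}, p, q.conj q.neg, ?_, ?_, ?_⟩
  · exact PropForm.mem_CnP_of_mem (by simp) ⟨fun _ => true, rfl⟩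
  · exact PropForm.mem_CnP_of_mem (by simp) ⟨fun _ => false, rfl⟩
  · exact PropForm.conj_neg_self_not_mem_CnP _ q
end
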